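/- arXiv:1812.09816 — 3 statements merged into one kernel-verified Lean document; each statement's English description precedes it below -/
import Mathlib

section
/- Let P, Q : [0, η_B] → ℝ be continuous with P > 0 on [0, η_B], and suppose G : [0, η_B] → ℝ is a nonzero C² function satisfying (P·G')' + Q·G = −λ·G on [0, η_B] with G(0) = G(η_B) = 0, where λ ∈ ℝ. Then λ > min_{η ∈ [0, η_B]} (−Q(η)). -/
/-!
If `λ ≤ -Q` on `[0, η_B]`, the energy `E = P G' G` satisfies
`E' = P G'² - (λ + Q) G² ≥ 0`, so `E` is monotone; as it vanishes at both ends it vanishes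
identically. Since `P > 0`, this gives `(G²)' = 2 G G' = 0`, hence `G² ≡ G(0)² = 0`,
contradicting `G ≢ 0`.
-/

open Set

theorem constant_of_hasDerivAt_nonneg_of_eq {f f' : ℝ → ℝ} {a b : ℝ}
    (hf : ∀ x ∈ Icc a b, HasDerivAt f (f' x) x) (hf'₀ : ∀ x ∈ Icc a b, 0 ≤ f' x)
    (hab : f a = f b) : ∀ x ∈ Icc a b, f x = f a := by
  have hmono : MonotoneOn f (Icc a b) := by
    refine monotoneOn_of_hasDerivWithinAt_nonneg (f' := f') (convex_Icc a b)
      (fun x hx ↦ (hf x hx).continuousAt.continuousWithinAt) (fun x hx ↦ ?_) (fun x hx ↦ ?_)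
    · exact (hf x (interior_subset hx)).hasDerivWithinAt
    · exact hf'₀ x (interior_subset hx)
  intro x hx
  have hab' : a ≤ b := hx.1.trans hx.2
  exact le_antisymm (hab ▸ hmono hx (right_mem_Icc.2 hab') hx.2)
    (hmono (left_mem_Icc.2 hab') hx hx.1)

theorem eq_zero_of_self_mul_deriv_eq_zero {G G' : ℝ → ℝ} {a b : ℝ}
    (hG : ∀ x ∈ Icc a b, HasDerivAt G (G' x) x) (hGG' : ∀ x ∈ Icc a b, G x * G' x = 0)
    (ha : G a = 0) : ∀ x ∈ Icc a b, G x = 0 := by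
  have hsq : ∀ x ∈ Icc a b, HasDerivAt (fun x ↦ G x * G x) 0 x := fun x hx ↦ by
    have h := (hG x hx).mul (hG x hx)
    rwa [mul_comm (G' x), hGG' x hx, add_zero] at h
  intro x hx
  have := constant_of_has_deriv_right_zero (fun y hy ↦ (hsq y hy).continuousAt.continuousWithinAt)
    (fun y hy ↦ (hsq y (Ico_subset_Icc_self hy)).hasDerivWithinAt) x hx
  simpa [ha] using this

theorem sturm_liouville_eigenvalue_bound_general (ηB lam : ℝ)
    (P Q G : ℝ → ℝ)
    (hQc : ContinuousOn Q (Set.Icc 0 ηB))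
    (hPpos : ∀ η ∈ Set.Icc 0 ηB, 0 < P η)
    (hG : ContDiff ℝ 2 G)
    (hGnz : ∃ η ∈ Set.Icc 0 ηB, G η ≠ 0)
    (hode : ∀ η ∈ Set.Icc 0 ηB,
      HasDerivAt (fun x => P x * deriv G x) (-lam * G η - Q η * G η) η)
    (hbc0 : G 0 = 0) (hbcB : G ηB = 0) :
    sInf ((fun η => -Q η) '' Set.Icc 0 ηB) < lam := by
  by_contra! hle
  have hbdd : BddBelow ((fun η => -Q η) '' Icc 0 ηB) :=
    (isCompact_Icc.image_of_continuousOn hQc.neg).bddBelow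
  have hQ : ∀ η ∈ Icc 0 ηB, lam + Q η ≤ 0 := fun η hη ↦ by
    linarith [hle.trans (csInf_le hbdd (mem_image_of_mem _ hη))]
  have hG' : ∀ x, HasDerivAt G (deriv G x) x := fun x ↦
    ((hG.differentiable (by norm_num)) x).hasDerivAt
  have henergy : ∀ x ∈ Icc 0 ηB, HasDerivAt (fun x ↦ P x * deriv G x * G x)
      (P x * deriv G x ^ 2 - (lam + Q x) * G x ^ 2) x := fun x hx ↦
    ((hode x hx).mul (hG' x)).congr_deriv (by ring)
  have henergy_zero : ∀ x ∈ Icc 0 ηB, P x * deriv G x * G x = 0 := by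
    have h := constant_of_hasDerivAt_nonneg_of_eq henergy
      (fun x hx ↦ by nlinarith [hPpos x hx, hQ x hx, sq_nonneg (deriv G x), sq_nonneg (G x)])
      (by simp [hbc0, hbcB])
    simpa [hbc0] using h
  have hGG' : ∀ x ∈ Icc 0 ηB, G x * deriv G x = 0 := fun x hx ↦ by
    have := henergy_zero x hx
    rw [mul_assoc, mul_comm (deriv G x)] at this
    exact (mul_eq_zero.1 this).resolve_left (hPpos x hx).ne'
  obtain ⟨η, hη, hGη⟩ := hGnz
  exact hGη (eq_zero_of_self_mul_deriv_eq_zero (fun x _ ↦ hG' x) hGG' hbc0 η hη)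

theorem sturm_liouville_eigenvalue_bound (ηB lam : ℝ) (hηB : 0 < ηB)
    (P Q G : ℝ → ℝ)
    (hPc : ContinuousOn P (Set.Icc 0 ηB)) (hQc : ContinuousOn Q (Set.Icc 0 ηB))
    (hPpos : ∀ η ∈ Set.Icc 0 ηB, 0 < P η)
    (hG : ContDiff ℝ 2 G)
    (hGnz : ∃ η ∈ Set.Icc 0 ηB, G η ≠ 0)
    (hode : ∀ η ∈ Set.Icc 0 ηB,
      HasDerivAt (fun x => P x * deriv G x) (-lam * G η - Q η * G η) η)
    (hbc0 : G 0 = 0) (hbcB : G ηB = 0) :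
    sInf ((fun η => -Q η) '' Set.Icc 0 ηB) < lam :=
  sturm_liouville_eigenvalue_bound_general ηB lam P Q G hQc hPpos hG hGnz hode hbc0 hbcB
end

section
/- Let H : [Z₁,Z₂] × [0,∞) → ℝ and H_S : [Z₁,Z₂] → ℝ be strictly positive, with H(·,T) sufficiently smooth, satisfying ∂(H²)/∂T = ∂/∂Z(H² ∂H/∂Z), with H_S stationary (H_S² H_S' ≡ const), and suppose (H³ − H_S³)·∂(H³ − H_S³)/∂Z vanishes at Z₁ and Z₂ for all T. Then d/dT ∫_{Z₁}^{Z₂} [(2/5)H⁵ − H_S³H² + (3/5)H_S⁵] dZ = −(1/3)∫_{Z₁}^{Z₂} [∂(H³ − H_S³)/∂Z]² dZ ≤ 0. -/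
/-!
Write `R = H³ - H_S³`. Since `H² ∂H/∂Z = (1/3) ∂(H³)/∂Z` and stationarity makes
`(H_S³)'' = 3 (H_S² H_S')'` vanish, the equation reads `∂(H²)/∂T = R''/3`. Differentiating the
energy density in time gives `(H³ - H_S³) ∂(H²)/∂T = R R''/3`, and one integration by parts,
whose boundary term `R R'` vanishes by assumption, turns `∫ R R''` into `-∫ R'²`.
Differentiation under the integral sign is justified by the joint `C¹` regularity of the
integrand on a compact neighbourhood.
-/

open Set Function intervalIntegral

section ParametricIntegral

variable {E : Type*} [NormedAddCommGroup E] [NormedSpace ℝ E]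

theorem hasDerivAt_fderiv_uncurry_right {f : ℝ → ℝ → E}
    (hf : Differentiable ℝ (uncurry f)) (z t : ℝ) :
    HasDerivAt (f z) (fderiv ℝ (uncurry f) (z, t) (0, 1)) t :=
  (hf (z, t)).hasFDerivAt.comp_hasDerivAt t ((hasDerivAt_const t z).prodMk (hasDerivAt_id t))

theorem hasDerivAt_intervalIntegral_of_contDiff [CompleteSpace E] {f : ℝ → ℝ → E}
    (hf : ContDiff ℝ 1 (uncurry f)) (a b t : ℝ) :
    HasDerivAt (fun s => ∫ z in a..b, f z s) (∫ z in a..b, deriv (f z) t) t := by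
  set f' : ℝ → ℝ → E := fun z s => fderiv ℝ (uncurry f) (z, s) (0, 1)
  have hf' : ∀ z s, HasDerivAt (f z) (f' z s) s :=
    hasDerivAt_fderiv_uncurry_right (hf.differentiable one_ne_zero)
  have hf'_cont : Continuous (uncurry f') :=
    (hf.continuous_fderiv one_ne_zero).clm_apply continuous_const
  have hslice : ∀ {g : ℝ → ℝ → E}, Continuous (uncurry g) → ∀ s, Continuous (g · s) :=
    fun hg s => hg.comp (continuous_id.prodMk continuous_const)
  obtain ⟨M, hM⟩ := (isCompact_uIcc.prod (isCompact_closedBall t 1)).exists_bound_of_continuousOn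
      hf'_cont.continuousOn
  have key := hasDerivAt_integral_of_dominated_loc_of_deriv_le (μ := MeasureTheory.volume)
    (F := fun s z => f z s) (F' := fun s z => f' z s) (bound := fun _ => M)
    (Metric.ball_mem_nhds t one_pos)
    (.of_forall fun s => (hslice hf.continuous s).aestronglyMeasurable)
    ((hslice hf.continuous t).intervalIntegrable a b)
    (hslice hf'_cont t).aestronglyMeasurable
    (.of_forall fun z hz s hs =>
      hM (z, s) ⟨uIoc_subset_uIcc hz, Metric.ball_subset_closedBall hs⟩)
    intervalIntegrable_const
    (.of_forall fun z _ s _ => hf' z s)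
  simpa only [(hf' _ t).deriv] using key.2

end ParametricIntegral

theorem integral_mul_deriv_deriv_eq_neg_integral_deriv_sq {R : ℝ → ℝ} (hR : ContDiff ℝ 2 R)
    {a b : ℝ} (ha : R a * deriv R a = 0) (hb : R b * deriv R b = 0) :
    ∫ z in a..b, R z * deriv (deriv R) z = -∫ z in a..b, deriv R z ^ 2 := by
  have hR' : ContDiff ℝ 1 (deriv R) := hR.iterate_deriv' 1 1
  rw [integral_mul_deriv_eq_deriv_mul
      (fun z _ => (hR.differentiable two_ne_zero z).hasDerivAt)
      (fun z _ => (hR'.differentiable one_ne_zero z).hasDerivAt)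
      (hR'.continuous.intervalIntegrable a b)
      ((hR'.continuous_deriv le_rfl).intervalIntegrable a b),
    ha, hb]
  simp only [sq, zero_sub, sub_zero]

theorem deriv_deriv_sub {f g : ℝ → ℝ} (hf : ContDiff ℝ 2 f) (hg : ContDiff ℝ 2 g) (z : ℝ) :
    deriv (deriv (fun x => f x - g x)) z = deriv (deriv f) z - deriv (deriv g) z := by
  simpa only [iteratedDeriv_succ, iteratedDeriv_zero] using
    iteratedDeriv_fun_sub (n := 2) hf.contDiffAt hg.contDiffAt

theorem sq_mul_deriv_eq_deriv_pow_three {h : ℝ → ℝ} (hh : Differentiable ℝ h) :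
    (fun z => h z ^ 2 * deriv h z) = fun z => 1 / 3 * deriv (fun z => h z ^ 3) z := by
  funext z
  rw [((hh z).hasDerivAt.fun_pow 3).deriv]
  ring

theorem deriv_deriv_pow_three_eq_zero_of_sq_mul_deriv_eq_const {s : ℝ → ℝ} {U : Set ℝ} {c : ℝ}
    (hU : IsOpen U) (hs : ∀ z ∈ U, DifferentiableAt ℝ s z)
    (hc : ∀ z ∈ U, s z ^ 2 * deriv s z = c) {z : ℝ} (hz : z ∈ U) :
    deriv (deriv (fun z => s z ^ 3)) z = 0 := by
  have hconst : deriv (fun z => s z ^ 3) =ᶠ[nhds z] fun _ => 3 * c := by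
    filter_upwards [hU.mem_nhds hz] with w hw
    rw [((hs w hw).hasDerivAt.fun_pow 3).deriv, ← hc w hw]
    ring
  rw [hconst.deriv_eq, deriv_const]

theorem deriv_sq_mul_deriv_eq_deriv_deriv_sub_pow_three_div_three {h s : ℝ → ℝ} {U : Set ℝ}
    {c : ℝ} (hh : ContDiff ℝ 2 h) (hs : ContDiff ℝ 2 s) (hU : IsOpen U)
    (hc : ∀ z ∈ U, s z ^ 2 * deriv s z = c) {z : ℝ} (hz : z ∈ U) :
    deriv (fun z => h z ^ 2 * deriv h z) z =
      1 / 3 * deriv (deriv (fun z => h z ^ 3 - s z ^ 3)) z := by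
  rw [sq_mul_deriv_eq_deriv_pow_three (hh.differentiable two_ne_zero), deriv_const_mul_field,
    deriv_deriv_sub (hh.pow 3) (hs.pow 3),
    deriv_deriv_pow_three_eq_zero_of_sq_mul_deriv_eq_const hU
      (fun w _ => hs.differentiable two_ne_zero w) hc hz, sub_zero]

theorem HasDerivAt.capillary_energy_density {h : ℝ → ℝ} {h' t : ℝ} (s : ℝ)
    (hh : HasDerivAt h h' t) :
    HasDerivAt (fun t => 2 / 5 * h t ^ 5 - s ^ 3 * h t ^ 2 + 3 / 5 * s ^ 5)
      ((h t ^ 3 - s ^ 3) * (2 * h t * h')) t := by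
  refine ((((hh.fun_pow 5).const_mul (2 / 5)).fun_sub ((hh.fun_pow 2).const_mul (s ^ 3))).add_const
    (3 / 5 * s ^ 5)).congr_deriv ?_
  push_cast
  ring

theorem lyapunov_energy_decay_general (Z₁ Z₂ : ℝ) (hZ : Z₁ < Z₂)
    (H : ℝ → ℝ → ℝ) (HS : ℝ → ℝ)
    (hHsmooth : ContDiff ℝ 2 (fun p : ℝ × ℝ => H p.1 p.2))
    (hHSsmooth : ContDiff ℝ 2 HS)
    (hpde : ∀ Z ∈ Set.Icc Z₁ Z₂, ∀ T : ℝ, 0 ≤ T →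
      deriv (fun t => (H Z t) ^ 2) T =
        deriv (fun z => (H z T) ^ 2 * deriv (fun w => H w T) z) Z)
    (hstat : ∃ c : ℝ, ∀ Z ∈ Set.Icc Z₁ Z₂, (HS Z) ^ 2 * deriv HS Z = c)
    (hbc : ∀ T : ℝ, 0 ≤ T →
      ((H Z₁ T) ^ 3 - (HS Z₁) ^ 3) *
          deriv (fun z => (H z T) ^ 3 - (HS z) ^ 3) Z₁ = 0 ∧
        ((H Z₂ T) ^ 3 - (HS Z₂) ^ 3) *
          deriv (fun z => (H z T) ^ 3 - (HS z) ^ 3) Z₂ = 0) :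
    ∀ T : ℝ, 0 ≤ T →
      HasDerivAt
          (fun t => ∫ Z in Z₁..Z₂,
            2 / 5 * (H Z t) ^ 5 - (HS Z) ^ 3 * (H Z t) ^ 2 + 3 / 5 * (HS Z) ^ 5)
          (-(1 / 3) * ∫ Z in Z₁..Z₂,
            (deriv (fun z => (H z T) ^ 3 - (HS z) ^ 3) Z) ^ 2) T ∧
        -(1 / 3) * (∫ Z in Z₁..Z₂,
            (deriv (fun z => (H z T) ^ 3 - (HS z) ^ 3) Z) ^ 2) ≤ 0 := by
  intro T hT
  obtain ⟨c, hc⟩ := hstat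
  have hHT : ContDiff ℝ 2 (fun z => H z T) := hHsmooth.comp (contDiff_id.prodMk contDiff_const)
  have hH_t : ∀ z, DifferentiableAt ℝ (fun t => H z t) T := fun z =>
    (hHsmooth.comp (contDiff_const.prodMk contDiff_id)).differentiable two_ne_zero T
  set R := fun z => H z T ^ 3 - HS z ^ 3
  have hflux : ∀ z ∈ Ioo Z₁ Z₂, deriv (fun t => H z t ^ 2) T = 1 / 3 * deriv (deriv R) z :=
    fun z hz => (hpde z (Ioo_subset_Icc_self hz) T hT).trans
      (deriv_sq_mul_deriv_eq_deriv_deriv_sub_pow_three_div_three hHT hHSsmooth isOpen_Ioo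
        (fun w hw => hc w (Ioo_subset_Icc_self hw)) hz)
  have hdissipation : ∫ z in Z₁..Z₂, deriv (fun t =>
      2 / 5 * (H z t) ^ 5 - (HS z) ^ 3 * (H z t) ^ 2 + 3 / 5 * (HS z) ^ 5) T =
      -(1 / 3) * ∫ z in Z₁..Z₂, deriv R z ^ 2 := calc
    -- `hflux` is only available on the open interval: the endpoints form a null set.
    _ = ∫ z in Z₁..Z₂, 1 / 3 * (R z * deriv (deriv R) z) := by
      refine integral_congr_Ioo_of_le hZ.le fun z hz => ?_
      have hG := hflux z hz
      rw [((hH_t z).hasDerivAt.fun_pow 2).deriv] at hG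
      refine ((hH_t z).hasDerivAt.capillary_energy_density (HS z)).deriv.trans ?_
      linear_combination R z * hG
    _ = -(1 / 3) * ∫ z in Z₁..Z₂, deriv R z ^ 2 := by
      rw [integral_const_mul, integral_mul_deriv_deriv_eq_neg_integral_deriv_sq
        ((hHT.pow 3).sub (hHSsmooth.pow 3)) (hbc T hT).1 (hbc T hT).2]
      ring
  refine ⟨hdissipation ▸ hasDerivAt_intervalIntegral_of_contDiff ?_ Z₁ Z₂ T, ?_⟩
  · have hHS' : ContDiff ℝ 2 (fun p : ℝ × ℝ => HS p.1) := hHSsmooth.comp contDiff_fst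
    exact (by fun_prop : ContDiff ℝ 2 _).of_le one_le_two
  · have : 0 ≤ ∫ z in Z₁..Z₂, deriv R z ^ 2 :=
      integral_nonneg hZ.le fun z _ => sq_nonneg (deriv R z)
    linarith

theorem lyapunov_energy_decay (Z₁ Z₂ : ℝ) (hZ : Z₁ < Z₂)
    (H : ℝ → ℝ → ℝ) (HS : ℝ → ℝ)
    (hHsmooth : ContDiff ℝ 2 (fun p : ℝ × ℝ => H p.1 p.2))
    (hHSsmooth : ContDiff ℝ 2 HS)
    (hHpos : ∀ Z ∈ Set.Icc Z₁ Z₂, ∀ T : ℝ, 0 ≤ T → 0 < H Z T)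
    (hHSpos : ∀ Z ∈ Set.Icc Z₁ Z₂, 0 < HS Z)
    (hpde : ∀ Z ∈ Set.Icc Z₁ Z₂, ∀ T : ℝ, 0 ≤ T →
      deriv (fun t => (H Z t) ^ 2) T =
        deriv (fun z => (H z T) ^ 2 * deriv (fun w => H w T) z) Z)
    (hstat : ∃ c : ℝ, ∀ Z ∈ Set.Icc Z₁ Z₂, (HS Z) ^ 2 * deriv HS Z = c)
    (hbc : ∀ T : ℝ, 0 ≤ T →
      ((H Z₁ T) ^ 3 - (HS Z₁) ^ 3) *
          deriv (fun z => (H z T) ^ 3 - (HS z) ^ 3) Z₁ = 0 ∧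
        ((H Z₂ T) ^ 3 - (HS Z₂) ^ 3) *
          deriv (fun z => (H z T) ^ 3 - (HS z) ^ 3) Z₂ = 0) :
    ∀ T : ℝ, 0 ≤ T →
      HasDerivAt
          (fun t => ∫ Z in Z₁..Z₂,
            2 / 5 * (H Z t) ^ 5 - (HS Z) ^ 3 * (H Z t) ^ 2 + 3 / 5 * (HS Z) ^ 5)
          (-(1 / 3) * ∫ Z in Z₁..Z₂,
            (deriv (fun z => (H z T) ^ 3 - (HS z) ^ 3) Z) ^ 2) T ∧
        -(1 / 3) * (∫ Z in Z₁..Z₂,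
            (deriv (fun z => (H z T) ^ 3 - (HS z) ^ 3) Z) ^ 2) ≤ 0 :=
  lyapunov_energy_decay_general Z₁ Z₂ hZ H HS hHsmooth hHSsmooth hpde hstat hbc
end

section
/- For α, θ ∈ (0, π/2) with α + θ < π/2, the quantity R̂(α,θ) = sin α/(cos θ − sin α) is strictly positive, and the geometric factor Â(α,θ) = [cos θ · sin α · cos(α+θ) − (π/2 − α − θ)·sin²α]/(cos θ − sin α)² is strictly positive. -/
/-!
Put `φ = α + θ`. Since `π/2 - φ < tan (π/2 - φ) = cos φ / sin φ`, the numerator of `Â` exceeds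
`sin α · cos φ · (cos θ · sin φ - sin α) / sin φ`, and `cos θ · sin φ - sin α = sin θ · cos φ`
because `α = φ - θ`. Both factors are positive under the Concus–Finn condition.
-/

open Real

theorem sin_lt_cos_of_add_lt_pi_div_two {α θ : ℝ} (hα : -(π / 2) ≤ α) (hθ : 0 ≤ θ)
    (h : α + θ < π / 2) : sin α < cos θ := by
  rw [← sin_pi_div_two_sub]
  exact sin_lt_sin_of_lt_of_le_pi_div_two hα (by linarith) (by linarith)

theorem pi_div_two_sub_mul_sin_lt_cos {φ : ℝ} (h0 : 0 < φ) (h1 : φ < π / 2) :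
    (π / 2 - φ) * sin φ < cos φ := by
  have hsin : 0 < sin φ := sin_pos_of_pos_of_lt_pi h0 (by linarith [pi_pos])
  have := lt_tan (x := π / 2 - φ) (by linarith) (by linarith)
  rw [tan_pi_div_two_sub, tan_eq_sin_div_cos, inv_div, lt_div_iff₀ hsin] at this
  exact this

theorem cos_mul_sin_add_sub_sin (α θ : ℝ) :
    cos θ * sin (α + θ) - sin α = sin θ * cos (α + θ) := by
  have : sin α = sin ((α + θ) - θ) := by ring_nf
  rw [this, sin_sub]
  ring

theorem concus_finn_numerator_pos {α θ : ℝ} (hα : 0 < α) (hθ : 0 < θ) (hCF : α + θ < π / 2) :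
    0 < cos θ * sin α * cos (α + θ) - (π / 2 - α - θ) * sin α ^ 2 := by
  set φ := α + θ with hφ
  have hsinα : 0 < sin α := sin_pos_of_pos_of_lt_pi hα (by linarith [pi_pos])
  have hsinθ : 0 < sin θ := sin_pos_of_pos_of_lt_pi hθ (by linarith [pi_pos])
  have hsinφ : 0 < sin φ := sin_pos_of_pos_of_lt_pi (by linarith) (by linarith [pi_pos])
  have hcosφ : 0 < cos φ := cos_pos_of_mem_Ioo ⟨by linarith, hCF⟩
  have hbound := pi_div_two_sub_mul_sin_lt_cos (φ := φ) (by linarith) hCF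
  have hident := cos_mul_sin_add_sub_sin α θ
  rw [← hφ] at hident
  have key : 0 < (cos θ * sin α * cos φ - (π / 2 - φ) * sin α ^ 2) * sin φ :=
    calc 0 < sin α * cos φ * (sin θ * cos φ) := by positivity
      _ = sin α * cos φ * (cos θ * sin φ - sin α) := by rw [hident]
      _ = cos θ * sin α * cos φ * sin φ - cos φ * sin α ^ 2 := by ring
      _ < (cos θ * sin α * cos φ - (π / 2 - φ) * sin α ^ 2) * sin φ := by
        linarith [mul_lt_mul_of_pos_right hbound (pow_pos hsinα 2)]
  have : π / 2 - α - θ = π / 2 - φ := by ring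
  rw [this]
  exact pos_of_mul_pos_left key hsinφ.le

open Real in
theorem concus_finn_geometric_factors (α θ : ℝ)
    (hα : α ∈ Set.Ioo 0 (π / 2)) (hθ : θ ∈ Set.Ioo 0 (π / 2))
    (hCF : α + θ < π / 2) :
    0 < Real.sin α / (Real.cos θ - Real.sin α) ∧
      0 < (Real.cos θ * Real.sin α * Real.cos (α + θ) -
            (π / 2 - α - θ) * Real.sin α ^ 2) /
          (Real.cos θ - Real.sin α) ^ 2 := by
  have hsinα : 0 < sin α := sin_pos_of_pos_of_lt_pi hα.1 (by linarith [hα.2, pi_pos])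
  have hden : 0 < cos θ - sin α :=
    sub_pos.2 (sin_lt_cos_of_add_lt_pi_div_two (by linarith [hα.1, pi_pos]) hθ.1.le hCF)
  exact ⟨div_pos hsinα hden,
    div_pos (concus_finn_numerator_pos hα.1 hθ.1 hCF) (pow_pos hden 2)⟩
end
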